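/- Let v be the vector field on ℝ² minus the closed negative real half-axis (including the origin) given by v(z) = (1 − 1/|z|)·z + (arg z)·(iz), identifying ℝ² with ℂ. Then for every point z = (ρcosθ, ρsinθ) in the domain and every ξ = (ξ₁, ξ₂) ∈ ℝ², the derivative of v satisfies dv(z)[ξ]·ξ = ξ_N² + (2 − 1/ρ)·ξ_T², where ξ_N = ξ₁cosθ + ξ₂sinθ and ξ_T = −ξ₁sinθ + ξ₂cosθ. -/

import Mathlib

open Real

noncomputable section

/-- The Euclidean inner product on `ℝ² ≅ ℂ`. -/
def rdot (z w : ℂ) : ℝ := z.re * w.re + z.im * w.im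

/-- The vector field `v(ρ cos θ, ρ sin θ) = (ρ-1)(cos θ, sin θ) + ρθ(-sin θ, cos θ)`,
i.e. `v(z) = (1 - 1/|z|)·z + (arg z)·(iz)` identifying `ℝ²` with `ℂ`. -/
def vField (z : ℂ) : ℂ :=
  ((1 - ‖z‖⁻¹ : ℝ) : ℂ) * z + ((Complex.arg z : ℝ) : ℂ) * (Complex.I * z)

/-!
On the slit plane `log z = log ‖z‖ + i arg z` is smooth with real derivative `ξ ↦ z⁻¹ ξ`, so
`d(‖·‖⁻¹)(z)[ξ] = -‖z‖⁻¹ Re(z⁻¹ ξ)` and `d(arg)(z)[ξ] = Im(z⁻¹ ξ)`. Writing `n = z / ρ`, the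
product rule gives `dv(z)[ξ] = (1 - 1/ρ) ξ + (ξ_N / ρ) n + θ iξ + ξ_T in`. Pairing with `ξ`
kills the rotation term `θ iξ` and leaves `(1 - 1/ρ)(ξ_N² + ξ_T²) + ξ_N² / ρ + ξ_T²`.
-/

open Complex

namespace Complex

theorem hasFDerivAt_arg {z : ℂ} (hz : z ∈ slitPlane) :
    HasFDerivAt arg (imCLM.comp (z⁻¹ • 1 : ℂ →L[ℝ] ℂ)) z := by
  have h := imCLM.hasFDerivAt.comp z (hasStrictFDerivAt_log_real hz).hasFDerivAt
  exact h.congr_of_eventuallyEq (Filter.Eventually.of_forall fun w => (log_im w).symm)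

theorem hasFDerivAt_norm_inv {z : ℂ} (hz : z ∈ slitPlane) :
    HasFDerivAt (fun w : ℂ => ‖w‖⁻¹) (-(‖z‖⁻¹ • reCLM.comp (z⁻¹ • 1 : ℂ →L[ℝ] ℂ))) z := by
  have exp_neg_log_re : ∀ w : ℂ, w ≠ 0 → Real.exp (-(log w).re) = ‖w‖⁻¹ := fun w hw => by
    rw [log_re, Real.exp_neg, Real.exp_log (norm_pos_iff.mpr hw)]
  have h : HasFDerivAt (fun w => Real.exp (-(log w).re)) _ z :=
    (reCLM.hasFDerivAt.comp z (hasStrictFDerivAt_log_real hz).hasFDerivAt).neg.exp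
  convert h.congr_of_eventuallyEq <| (eventually_ne_nhds (slitPlane_ne_zero hz)).mono
    fun w hw => (exp_neg_log_re w hw).symm using 1
  change _ = Real.exp (-(log z).re) • _
  rw [exp_neg_log_re z (slitPlane_ne_zero hz), smul_neg]

theorem re_inv_mul_eq_rdot (z ξ : ℂ) : (z⁻¹ * ξ).re = rdot ξ z / ‖z‖ ^ 2 := by
  simp only [rdot, mul_re, inv_re, inv_im, normSq_eq_norm_sq]
  ring

theorem im_inv_mul_eq_rdot (z ξ : ℂ) : (z⁻¹ * ξ).im = rdot ξ (I * z) / ‖z‖ ^ 2 := by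
  simp only [rdot, mul_re, mul_im, inv_re, inv_im, I_re, I_im, normSq_eq_norm_sq]
  ring

theorem ofReal_mul_exp_mem_slitPlane {ρ θ : ℝ} (hρ : 0 < ρ) (hθ : θ ∈ Set.Ioo (-π) π) :
    (ρ : ℂ) * exp (θ * I) ∈ slitPlane := by
  refine mem_slitPlane_iff_arg.mpr ⟨?_, mul_ne_zero (ofReal_ne_zero.mpr hρ.ne') (exp_ne_zero _)⟩
  rw [exp_mul_I, arg_mul_cos_add_sin_mul_I hρ ⟨hθ.1, hθ.2.le⟩]
  exact hθ.2.ne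

end Complex

theorem fderiv_vField_apply {z : ℂ} (hz : z ∈ slitPlane) (ξ : ℂ) :
    fderiv ℝ vField z ξ = (1 - ‖z‖⁻¹) • ξ + (‖z‖⁻¹ * (z⁻¹ * ξ).re) • z
      + arg z • (I * ξ) + (z⁻¹ * ξ).im • (I * z) := by
  have hv : vField = fun w => (1 - ‖w‖⁻¹) • w + arg w • (I * w) := by
    funext w
    simp [vField, real_smul]
  have h : HasFDerivAt (fun w => (1 - ‖w‖⁻¹) • w + arg w • (I * w)) _ z :=
    (((hasFDerivAt_norm_inv hz).const_sub 1).smul (hasFDerivAt_id z)).add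
      ((hasFDerivAt_arg hz).smul ((hasFDerivAt_id z).const_mul I))
  rw [hv, h.fderiv]
  simp only [add_apply, smul_apply, ContinuousLinearMap.smulRight_apply,
    ContinuousLinearMap.comp_apply, ContinuousLinearMap.id_apply, one_apply_eq_self,
    reCLM_apply, imCLM_apply, id_eq, smul_eq_mul, neg_neg, mul_smul]
  abel

theorem rdot_fderiv_vField_self {z : ℂ} (hz : z ∈ slitPlane) (ξ : ℂ) :
    rdot (fderiv ℝ vField z ξ) ξ =
      (rdot ξ z / ‖z‖) ^ 2 + (2 - ‖z‖⁻¹) * (rdot ξ (I * z) / ‖z‖) ^ 2 := by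
  have hz0 : ‖z‖ ≠ 0 := norm_ne_zero_iff.mpr (slitPlane_ne_zero hz)
  have hnorm_sq : z.re ^ 2 + z.im ^ 2 = ‖z‖ ^ 2 := by
    rw [← normSq_eq_norm_sq, normSq_apply]
    ring
  rw [fderiv_vField_apply hz, re_inv_mul_eq_rdot, im_inv_mul_eq_rdot]
  simp only [rdot, add_re, add_im, smul_re, smul_im, mul_re, mul_im, I_re, I_im, smul_eq_mul]
  field_simp
  linear_combination (1 - ‖z‖) * (ξ.re ^ 2 + ξ.im ^ 2) * hnorm_sq

/-- Lemma 2.2 (c): at each point `z = ρ e^{iθ}` of the slit plane (`ρ > 0`, `|θ| < π`),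
the Fréchet derivative of `v` satisfies `dv(z)[ξ]·ξ = ξ_N² + (2 - 1/ρ)·ξ_T²`, where
`ξ_N = ξ₁ cos θ + ξ₂ sin θ` and `ξ_T = -ξ₁ sin θ + ξ₂ cos θ`. -/
theorem vField_deriv_quadratic_form (ρ θ : ℝ) (hρ : 0 < ρ) (hθ : θ ∈ Set.Ioo (-π) π)
    (ξ : ℂ) :
    rdot (fderiv ℝ vField ((ρ : ℂ) * Complex.exp (θ * Complex.I)) ξ) ξ =
      (ξ.re * Real.cos θ + ξ.im * Real.sin θ) ^ 2 +
        (2 - 1 / ρ) * (-ξ.re * Real.sin θ + ξ.im * Real.cos θ) ^ 2 := by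
  have hnorm : ‖(ρ : ℂ) * exp (θ * I)‖ = ρ := by
    rw [norm_mul, norm_exp_ofReal_mul_I, norm_real, Real.norm_of_nonneg hρ.le, mul_one]
  rw [rdot_fderiv_vField_self (ofReal_mul_exp_mem_slitPlane hρ hθ), hnorm]
  simp only [rdot, mul_re, mul_im, I_re, I_im, ofReal_re, ofReal_im, exp_ofReal_mul_I_re,
    exp_ofReal_mul_I_im]
  field_simp
  ring
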